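/- arXiv:2311.00103 — 8 statements merged into one kernel-verified Lean document; each statement's English description precedes it below -/
import Mathlib

section
/- With the quantum double relations and the coset-averaged operators as defined, for all g, h ∈ G one has B^{gN} · A^{hN} = A^{hN} · B^{(h⁻¹·g·h)N}. -/
open scoped Classical

/-- The coset-averaged operator `A^{hN} := |N|⁻¹ ∑_{n ∈ N} A(h·n)`. -/
noncomputable def Acoset {G R : Type*} [Group G] [Fintype G] [Ring R] [Algebra ℂ R]
    (A : G → R) (N : Subgroup G) (h : G) : R :=
  algebraMap ℂ R ((Fintype.card N : ℂ)⁻¹) * ∑ n : N, A (h * n)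

/-- The coset-summed operator `B^{gN} := ∑_{n ∈ N} B(g·n)`. -/
noncomputable def Bcoset {G R : Type*} [Group G] [Fintype G] [Ring R]
    (B : G → R) (N : Subgroup G) (g : G) : R :=
  ∑ n : N, B (g * n)

/-- With the quantum double relations, `B^{gN} · A^{hN} = A^{hN} · B^{(h⁻¹gh)N}`. -/
theorem Bcoset_mul_Acoset {G R : Type*} [Group G] [Fintype G] [Ring R] [Algebra ℂ R]
    (N : Subgroup G) [N.Normal] (A B : G → R)
    (hA : ∀ h h' : G, A h * A h' = A (h * h'))
    (hB : ∀ g g' : G, B g * B g' = if g = g' then B g else 0)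
    (hBA : ∀ g h : G, B g * A h = A h * B (h⁻¹ * g * h)) :
    ∀ g h : G, Bcoset B N g * Acoset A N h = Acoset A N h * Bcoset B N (h⁻¹ * g * h) := by
  intro g h
  have key : ∀ n : N, (∑ m : N, B ((h * (n : G))⁻¹ * (g * (m : G)) * (h * n))) =
      ∑ m : N, B (h⁻¹ * g * h * (m : G)) := by
    intro n
    set c : G := h⁻¹ * g * h with hc
    have e : ∀ m : G, c⁻¹ * ((h * (n : G))⁻¹ * (g * m) * (h * n)) =
        (c⁻¹ * (n : G)⁻¹ * c⁻¹⁻¹) * (h⁻¹ * m * h⁻¹⁻¹) * (n : G) := by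
      intro m; rw [hc]; group
    have mem : ∀ m : N, c⁻¹ * ((h * (n : G))⁻¹ * (g * (m : G)) * (h * n)) ∈ N := by
      intro m
      rw [e]
      exact mul_mem (mul_mem
        (Subgroup.Normal.conj_mem ‹N.Normal› _ (inv_mem n.2) c⁻¹)
        (Subgroup.Normal.conj_mem ‹N.Normal› _ m.2 h⁻¹)) n.2
    set f : N → N := fun m => ⟨_, mem m⟩ with hf
    have hinj : Function.Injective f := by
      intro m m' hmm
      have h1 : c⁻¹ * ((h * (n : G))⁻¹ * (g * (m : G)) * (h * n)) =
          c⁻¹ * ((h * (n : G))⁻¹ * (g * (m' : G)) * (h * n)) :=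
        congrArg (fun x : N => (x : G)) hmm
      rw [e, e] at h1
      have h2 := mul_right_cancel h1
      have h3 : h⁻¹ * (m : G) * h⁻¹⁻¹ = h⁻¹ * (m' : G) * h⁻¹⁻¹ :=
        mul_left_cancel h2
      have h4 := mul_right_cancel h3
      exact Subtype.ext (mul_left_cancel h4)
    have hbij : Function.Bijective f := Finite.injective_iff_bijective.mp hinj
    refine Fintype.sum_bijective f hbij _ _ (fun m => ?_)
    congr 1
    have : ((f m : G)) = c⁻¹ * ((h * (n : G))⁻¹ * (g * (m : G)) * (h * n)) := rfl
    rw [this]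
    group
  unfold Bcoset Acoset
  rw [← mul_assoc, ← Algebra.commutes, mul_assoc, mul_assoc]
  congr 1
  calc (∑ m : N, B (g * m)) * ∑ n : N, A (h * n)
      = ∑ n : N, ∑ m : N, B (g * m) * A (h * n) := by
        rw [Finset.sum_mul_sum]; exact Finset.sum_comm
    _ = ∑ n : N, A (h * n) * ∑ m : N, B ((h * (n : G))⁻¹ * (g * (m : G)) * (h * n)) := by
        simp_rw [hBA, Finset.mul_sum]
    _ = ∑ n : N, A (h * n) * ∑ m : N, B (h⁻¹ * g * h * (m : G)) := by
        simp_rw [key]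
    _ = (∑ n : N, A (h * n)) * ∑ m : N, B (h⁻¹ * g * h * (m : G)) := by
        rw [Finset.sum_mul]
end

section
/- In the ribbon algebra A_G, if the double cosets N'g₁N and N'g₂N are distinct (i.e., g₂ ∉ N'g₁N), then for all h₁, h₂ ∈ G the product G^{h₁,g₁} · G^{h₂,g₂} equals 0. -/
open scoped Classical

/-- The ribbon basis element `F^{h,g} := single h 𝟙_{{g}}` of the algebra
`A_G = MonoidAlgebra (G → ℂ) G`. -/
noncomputable def Frib {G : Type*} [Group G] (h g : G) : MonoidAlgebra (G → ℂ) G :=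
  MonoidAlgebra.single h (fun x => if x = g then (1 : ℂ) else 0)

/-- The tunneling ribbon operator
`G^{h,g} := ∑_{n ∈ N} ∑_{n' ∈ N'} F^{n'⁻¹hn', n'⁻¹gn}`. -/
noncomputable def Grib {G : Type*} [Group G] [Fintype G] (N N' : Subgroup G) (h g : G) :
    MonoidAlgebra (G → ℂ) G :=
  ∑ n : N, ∑ n' : N', Frib ((n' : G)⁻¹ * h * (n' : G)) ((n' : G)⁻¹ * g * (n : G))

lemma Frib_mul_Frib_ne {G : Type*} [Group G] (h₁ g₁ h₂ g₂ : G) (hg : g₁ ≠ g₂) :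
    Frib h₁ g₁ * Frib h₂ g₂ = 0 := by
  unfold Frib
  rw [MonoidAlgebra.single_mul_single]
  convert MonoidAlgebra.single_zero (h₁ * h₂)
  funext x
  simp only [Pi.mul_apply]
  by_cases hx : x = g₁
  · subst hx; simp [hg]
  · simp [hx]

/-- If the double cosets `N'g₁N` and `N'g₂N` are distinct (`g₂ ∉ N'g₁N`), then
`G^{h₁,g₁} · G^{h₂,g₂} = 0`. -/
theorem Grib_mul_Grib_eq_zero_of_not_mem_doubleCoset
    {G : Type*} [Group G] [Fintype G] (N N' : Subgroup G) (g₁ g₂ : G)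
    (hsep : ¬ ∃ n' ∈ N', ∃ n ∈ N, n' * g₁ * n = g₂) :
    ∀ h₁ h₂ : G, Grib N N' h₁ g₁ * Grib N N' h₂ g₂ = 0 := by
  intro h₁ h₂
  unfold Grib
  rw [Finset.sum_mul]
  apply Finset.sum_eq_zero
  intro n _
  rw [Finset.sum_mul]
  apply Finset.sum_eq_zero
  intro n' _
  rw [Finset.mul_sum]
  apply Finset.sum_eq_zero
  intro m _
  rw [Finset.mul_sum]
  apply Finset.sum_eq_zero
  intro m' _
  apply Frib_mul_Frib_ne
  intro heq
  apply hsep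
  refine ⟨(m' : G) * (n' : G)⁻¹, mul_mem m'.2 (inv_mem n'.2), (n : G) * (m : G)⁻¹,
    mul_mem n.2 (inv_mem m.2), ?_⟩
  have : (m' : G) * ((n' : G)⁻¹ * g₁ * (n : G)) * (m : G)⁻¹
      = (m' : G) * ((m' : G)⁻¹ * g₂ * (m : G)) * (m : G)⁻¹ := by rw [heq]
  simpa [mul_assoc] using this
end

section
/- In the ribbon algebra A_G, let g ∈ G satisfy N ∩ g⁻¹N'g = {1}. Then for all h₁, h₂ ∈ G one has G^{h₁,g} · G^{h₂,g} = G^{h₁h₂,g}. -/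
open scoped Classical

lemma Frib_mul {G : Type*} [Group G] (h₁ h₂ g₁ g₂ : G) :
    Frib h₁ g₁ * Frib h₂ g₂ = if g₁ = g₂ then Frib (h₁ * h₂) g₁ else 0 := by
  unfold Frib
  rw [MonoidAlgebra.single_mul_single]
  split_ifs with h
  · subst h
    congr 1
    funext x
    by_cases hx : x = g₁ <;> simp [hx, Pi.mul_apply]
  · have hz : ((fun x => if x = g₁ then (1:ℂ) else 0) *
        (fun x => if x = g₂ then (1:ℂ) else 0)) = 0 := by
      funext x
      rcases eq_or_ne x g₁ with rfl | hx
      · simp [Pi.mul_apply, h]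
      · simp [Pi.mul_apply, hx]
    simp [hz]

/-- If `g` satisfies `N ∩ g⁻¹N'g = {1}`, then `G^{h₁,g} · G^{h₂,g} = G^{h₁h₂,g}`. -/
theorem Grib_mul_Grib_same_coset
    {G : Type*} [Group G] [Fintype G] (N N' : Subgroup G) (g : G)
    (htriv : ∀ x ∈ N, g * x * g⁻¹ ∈ N' → x = 1) :
    ∀ h₁ h₂ : G, Grib N N' h₁ g * Grib N N' h₂ g = Grib N N' (h₁ * h₂) g := by
  intro h₁ h₂
  have key : ∀ (n₁ n₂ : N) (n₁' n₂' : N'),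
      ((n₁' : G)⁻¹ * g * n₁ = (n₂' : G)⁻¹ * g * n₂) ↔ (n₂ = n₁ ∧ n₂' = n₁') := by
    intro n₁ n₂ n₁' n₂'
    constructor
    · intro h
      have hx : g * ((n₂ : G) * (n₁ : G)⁻¹) * g⁻¹ = (n₂' : G) * (n₁' : G)⁻¹ := by
        have h' : (n₂' : G) * ((n₂' : G)⁻¹ * g * n₂) * (n₁ : G)⁻¹ * g⁻¹
            = (n₂' : G) * ((n₁' : G)⁻¹ * g * n₁) * (n₁ : G)⁻¹ * g⁻¹ := by rw [h]
        group at h' ⊢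
        exact h'
      have hmem : ((n₂ : G) * (n₁ : G)⁻¹) ∈ N := mul_mem n₂.2 (inv_mem n₁.2)
      have hmem' : g * ((n₂ : G) * (n₁ : G)⁻¹) * g⁻¹ ∈ N' := by
        rw [hx]; exact mul_mem n₂'.2 (inv_mem n₁'.2)
      have h1 := htriv _ hmem hmem'
      have hn : (n₂ : G) = (n₁ : G) := by
        have := mul_inv_eq_one.mp h1
        exact this
      have hn2 : n₂ = n₁ := Subtype.ext hn
      refine ⟨hn2, ?_⟩
      have : (n₂' : G) = (n₁' : G) := by
        have h' := h
        rw [hn] at h'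
        have h2 := mul_right_cancel h'
        have h3 := mul_right_cancel h2
        exact inv_inj.mp h3.symm
      exact Subtype.ext this
    · rintro ⟨rfl, rfl⟩; rfl
  unfold Grib
  rw [Finset.sum_mul_sum]
  simp only [Finset.sum_mul, Finset.mul_sum, Frib_mul]
  rw [Finset.sum_comm]
  refine Finset.sum_congr rfl fun n₁ _ => ?_
  rw [Finset.sum_comm]
  refine Finset.sum_congr rfl fun n₁' _ => ?_
  simp only [key, ite_and]
  simp [Finset.sum_ite_eq', Finset.sum_ite_eq, mul_assoc, mul_inv_cancel_left, inv_mul_cancel_left]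
end

section
/- Define the map σ : A_G → A_G by (σ x)(h) := complex conjugate (taken coefficientwise, as a function on G) of x(h⁻¹). Then σ is an additive, conjugate-linear involution that is antimultiplicative (σ(x·y) = σ(y)·σ(x) for all x, y ∈ A_G), it satisfies σ(F^{h,g}) = F^{h⁻¹,g}, and consequently σ(G^{h,g}) = G^{h⁻¹,g} for all h, g ∈ G and σ(T^{n,g}) = T^{n⁻¹,g} for all n, g ∈ G. (These are the Hermitian-conjugation properties of the tunneling and condensation ribbon operators.) -/
/-!
`σ` is coefficientwise conjugation composed with inversion of the group index. Inversion reverses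
products in `G` and conjugation is multiplicative on the commutative coefficient ring `G → ℂ`, so
`σ (single a f * single b g) = σ (single b g) * σ (single a f)`, and antimultiplicativity follows by
biadditivity. On ribbon operators `σ` only inverts the group label, and conjugates invert termwise:
`(ℓ n ℓ⁻¹)⁻¹ = ℓ n⁻¹ ℓ⁻¹`.
-/

open scoped Classical

/-- The condensation ribbon operator `T^{n,g} := ∑_{ℓ ∈ M} F^{ℓnℓ⁻¹, ℓg⁻¹}`. -/
noncomputable def Trib {G : Type*} [Group G] [Fintype G] (M : Subgroup G) (n g : G) :
    MonoidAlgebra (G → ℂ) G :=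
  ∑ ℓ : M, Frib ((ℓ : G) * n * (ℓ : G)⁻¹) ((ℓ : G) * g⁻¹)

/-- Hermitian conjugation `σ` on `A_G`: `(σ x)(h) := conj (x (h⁻¹))` coefficientwise. -/
noncomputable def hermConj {G : Type*} [Group G] [Fintype G]
    (x : MonoidAlgebra (G → ℂ) G) : MonoidAlgebra (G → ℂ) G :=
  MonoidAlgebra.ofCoeff (Finsupp.equivFunOnFinite.symm (fun h => fun t => (starRingEnd ℂ) (x.coeff h⁻¹ t)))

section hermConj

open MonoidAlgebra

variable {G : Type*} [Group G] [Fintype G]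

@[simp]
lemma coeff_hermConj (x : MonoidAlgebra (G → ℂ) G) (h : G) :
    (hermConj x).coeff h = star (x.coeff h⁻¹) :=
  rfl

lemma hermConj_add (x y : MonoidAlgebra (G → ℂ) G) :
    hermConj (x + y) = hermConj x + hermConj y := by
  ext h : 2
  simp

lemma hermConj_smul (c : ℂ) (x : MonoidAlgebra (G → ℂ) G) :
    hermConj (c • x) = (starRingEnd ℂ c) • hermConj x := by
  ext h t
  simp

lemma hermConj_hermConj (x : MonoidAlgebra (G → ℂ) G) : hermConj (hermConj x) = x := by
  ext h : 2
  simp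

lemma hermConj_single (a : G) (f : G → ℂ) : hermConj (single a f) = single a⁻¹ (star f) := by
  ext h t
  simp only [coeff_hermConj, coeff_single, Finsupp.single_apply, inv_eq_iff_eq_inv, eq_comm (a := a)]
  split_ifs <;> simp

noncomputable def hermConjAddHom : MonoidAlgebra (G → ℂ) G →+ MonoidAlgebra (G → ℂ) G :=
  AddMonoidHom.mk' hermConj hermConj_add

lemma hermConj_zero : hermConj (0 : MonoidAlgebra (G → ℂ) G) = 0 :=
  hermConjAddHom.map_zero

lemma hermConj_sum {ι : Type*} (s : Finset ι) (f : ι → MonoidAlgebra (G → ℂ) G) :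
    hermConj (∑ i ∈ s, f i) = ∑ i ∈ s, hermConj (f i) :=
  map_sum hermConjAddHom f s

lemma hermConj_mul (x y : MonoidAlgebra (G → ℂ) G) :
    hermConj (x * y) = hermConj y * hermConj x := by
  induction x using MonoidAlgebra.induction_linear with
  | zero => simp [hermConj_zero]
  | add x x' hx hx' => simp only [add_mul, mul_add, hermConj_add, hx, hx']
  | single a f =>
    induction y using MonoidAlgebra.induction_linear with
    | zero => simp [hermConj_zero]
    | add y y' hy hy' => simp only [mul_add, add_mul, hermConj_add, hy, hy']
    | single b g => simp [hermConj_single, mul_inv_rev, star_mul]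

lemma hermConj_Frib (h g : G) : hermConj (Frib h g) = Frib h⁻¹ g := by
  simp [Frib, hermConj_single, funext_iff, apply_ite star]

lemma hermConj_Grib (N N' : Subgroup G) (h g : G) :
    hermConj (Grib N N' h g) = Grib N N' h⁻¹ g := by
  simp only [Grib, hermConj_sum, hermConj_Frib, mul_inv_rev, inv_inv, mul_assoc]

lemma hermConj_Trib (M : Subgroup G) (n g : G) : hermConj (Trib M n g) = Trib M n⁻¹ g := by
  simp only [Trib, hermConj_sum, hermConj_Frib, mul_inv_rev, inv_inv, mul_assoc]

end hermConj

/-- `σ` is an additive, conjugate-linear, antimultiplicative involution on `A_G`, with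
`σ(F^{h,g}) = F^{h⁻¹,g}`, `σ(G^{h,g}) = G^{h⁻¹,g}` and `σ(T^{n,g}) = T^{n⁻¹,g}`. -/
theorem hermConj_properties {G : Type*} [Group G] [Fintype G] (N N' M : Subgroup G) :
    (∀ x y : MonoidAlgebra (G → ℂ) G, hermConj (x + y) = hermConj x + hermConj y) ∧
    (∀ (c : ℂ) (x : MonoidAlgebra (G → ℂ) G),
        hermConj (c • x) = (starRingEnd ℂ c) • hermConj x) ∧
    (∀ x : MonoidAlgebra (G → ℂ) G, hermConj (hermConj x) = x) ∧
    (∀ x y : MonoidAlgebra (G → ℂ) G, hermConj (x * y) = hermConj y * hermConj x) ∧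
    (∀ h g : G, hermConj (Frib h g) = Frib h⁻¹ g) ∧
    (∀ h g : G, hermConj (Grib N N' h g) = Grib N N' h⁻¹ g) ∧
    (∀ n g : G, hermConj (Trib M n g) = Trib M n⁻¹ g) :=
  ⟨hermConj_add, hermConj_smul, hermConj_hermConj, hermConj_mul, hermConj_Frib,
    hermConj_Grib N N', hermConj_Trib M⟩
end

section
/- In the ribbon algebra A_G, for all h, g ∈ G, all n ∈ N and all n' ∈ N', one has G^{h,g} = G^{n'⁻¹hn', n'⁻¹gn}; that is, G^{h,g} depends on (h,g) only through its equivalence class under the relation (h,g) ∼_{N,N'} (n'⁻¹hn', n'⁻¹gn). -/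
open scoped Classical

/-- `G^{h,g}` depends only on the equivalence class of `(h,g)` under
`(h,g) ∼_{N,N'} (n'⁻¹hn', n'⁻¹gn)` for `n ∈ N`, `n' ∈ N'`. -/
theorem Grib_eq_of_rel {G : Type*} [Group G] [Fintype G] (N N' : Subgroup G) :
    ∀ (h g : G), ∀ n ∈ N, ∀ n' ∈ N',
      Grib N N' h g = Grib N N' (n'⁻¹ * h * n') (n'⁻¹ * g * n) := by
  intro h g n hn n' hn'
  unfold Grib
  refine Fintype.sum_equiv (Equiv.mulLeft (⟨n, hn⟩ : N)⁻¹) _ _ fun m => ?_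
  refine Fintype.sum_equiv (Equiv.mulLeft (⟨n', hn'⟩ : N')⁻¹) _ _ fun m' => ?_
  simp only [Equiv.coe_mulLeft, Subgroup.coe_mul, InvMemClass.coe_inv]
  congr 1 <;> group
end

section
/- In the ribbon algebra A_G, for all n, n', g, g' ∈ G: if gM ≠ g'M (the left cosets of M are distinct) then T^{n,g} · T^{n',g'} = 0; and for equal second index, T^{n,g} · T^{n',g} = T^{nn',g}. -/
/-!
The basis elements multiply like matrix units: `F^{h,g} F^{h',g'}` vanishes unless `g = g'`.
In `T^{n,g} T^{n',g'}` the term indexed by `(ℓ, ℓ')` therefore survives only when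
`ℓ g⁻¹ = ℓ' g'⁻¹`, i.e. `ℓ⁻¹ ℓ' = g⁻¹ g'`. This is impossible when `gM ≠ g'M`, and for `g = g'` it
forces `ℓ = ℓ'`, leaving `∑ ℓ, F^{(ℓnℓ⁻¹)(ℓn'ℓ⁻¹), ℓg⁻¹} = T^{nn',g}`.
-/

open scoped Classical

section Ribbon

variable {G : Type*} [Group G]

lemma Frib_mul_Frib_of_ne {h₁ h₂ g₁ g₂ : G} (hg : g₁ ≠ g₂) : Frib h₁ g₁ * Frib h₂ g₂ = 0 := by
  rw [Frib, Frib, MonoidAlgebra.single_mul_single]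
  convert MonoidAlgebra.single_zero (h₁ * h₂)
  funext x
  by_cases hx : x = g₁ <;> simp [hx, hg]

lemma Frib_mul_Frib_self (h₁ h₂ g : G) : Frib h₁ g * Frib h₂ g = Frib (h₁ * h₂) g := by
  rw [Frib, Frib, Frib, MonoidAlgebra.single_mul_single]
  congr 1
  funext x
  by_cases hx : x = g <;> simp [hx]

variable [Fintype G] (M : Subgroup G)

lemma Trib_mul_Trib_of_ne {g g' : G} (hg : (g : G ⧸ M) ≠ (g' : G ⧸ M)) (n n' : G) :
    Trib M n g * Trib M n' g' = 0 := by
  rw [Trib, Trib, Finset.sum_mul_sum]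
  refine Finset.sum_eq_zero fun ℓ _ => Finset.sum_eq_zero fun ℓ' _ => Frib_mul_Frib_of_ne ?_
  intro h
  have hquot : (ℓ : G)⁻¹ * ℓ' = g⁻¹ * g' := by
    rw [inv_mul_eq_iff_eq_mul, ← mul_assoc, h, inv_mul_cancel_right]
  exact hg (QuotientGroup.eq.mpr (hquot ▸ mul_mem (inv_mem ℓ.2) ℓ'.2))

lemma Trib_mul_Trib_self (n n' g : G) : Trib M n g * Trib M n' g = Trib M (n * n') g := by
  rw [Trib, Trib, Trib, Finset.sum_mul_sum]
  refine Finset.sum_congr rfl fun ℓ _ => ?_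
  rw [Finset.sum_eq_single_of_mem ℓ (Finset.mem_univ _), Frib_mul_Frib_self]
  · congr 1
    group
  · intro ℓ' _ hne
    exact Frib_mul_Frib_of_ne fun h => hne (Subtype.ext (mul_right_cancel h)).symm

end Ribbon

/-- If `gM ≠ g'M` then `T^{n,g} · T^{n',g'} = 0`; and for equal second index,
`T^{n,g} · T^{n',g} = T^{nn',g}`. -/
theorem Trib_mul_Trib {G : Type*} [Group G] [Fintype G] (M : Subgroup G) :
    (∀ n n' g g' : G, (g : G ⧸ M) ≠ (g' : G ⧸ M) → Trib M n g * Trib M n' g' = 0) ∧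
    (∀ n n' g : G, Trib M n g * Trib M n' g = Trib M (n * n') g) :=
  ⟨fun n n' _ _ hg => Trib_mul_Trib_of_ne M hg n n', Trib_mul_Trib_self M⟩
end

section
/- Let G be a finite group, N a normal subgroup of G, and M a subgroup of G with N ≤ M. Then for all h₁, g₁ ∈ M and all h₂, g₂ ∈ G: ∑ over pairs (h,g) ∈ G × G with g⁻¹hg ∈ M of [g₁N = (g⁻¹hg)N]·[g₂·h = 1]·[Ng = N·h₂·g·h₁⁻¹] equals ∑ over g ∈ G of [N·(g·g₁·g⁻¹) = N·g₂⁻¹]·[N·(g·h₁·g⁻¹) = N·h₂], where [P] denotes 1 if the condition P holds and 0 otherwise. (This is the simplification of the tunneling-algebra character formula in the case M' = G, N' = {e}.) -/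
open scoped Classical

/-! The constraint `g₂ * h = 1` pins `h = g₂⁻¹`, collapsing the double sum to a sum over `g`.
For that `h`, both remaining coset conditions are conjugation identities in `G ⧸ N`, and the
membership `g⁻¹ h g ∈ M` is automatic: `g⁻¹ h g` lies in the coset `g₁ N ⊆ M`. -/

theorem eq_inv_mul_mul_iff_mul_mul_inv_eq {Q : Type*} [Group Q] (a b c : Q) :
    a = b⁻¹ * c * b ↔ b * a * b⁻¹ = c := by
  rw [mul_assoc, eq_inv_mul_iff_mul_eq, mul_inv_eq_iff_eq_mul]

theorem eq_mul_mul_inv_iff_mul_mul_inv_eq {Q : Type*} [Group Q] (a b c : Q) :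
    b = c * b * a⁻¹ ↔ b * a * b⁻¹ = c := by
  rw [eq_mul_inv_iff_mul_eq, mul_inv_eq_iff_eq_mul, eq_comm]

theorem Subgroup.mem_of_mk_eq_mk {G : Type*} [Group G] {N M : Subgroup G} (hNM : N ≤ M)
    {a b : G} (ha : a ∈ M) (hab : (a : G ⧸ N) = b) : b ∈ M := by
  simpa using M.mul_mem ha (hNM (QuotientGroup.eq.mp hab))

theorem tunneling_character_simplification_general {G : Type*} [Group G] [Fintype G]
    (N M : Subgroup G) [N.Normal] (hNM : N ≤ M)
    (h₁ g₁ : G) (hg₁ : g₁ ∈ M) (h₂ g₂ : G) :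
    (∑ p : G × G,
        if p.2⁻¹ * p.1 * p.2 ∈ M ∧
            (g₁ : G ⧸ N) = ((p.2⁻¹ * p.1 * p.2 : G) : G ⧸ N) ∧
            g₂ * p.1 = 1 ∧
            (p.2 : G ⧸ N) = ((h₂ * p.2 * h₁⁻¹ : G) : G ⧸ N)
          then (1 : ℂ) else 0)
      =
    (∑ g : G,
        if ((g * g₁ * g⁻¹ : G) : G ⧸ N) = ((g₂⁻¹ : G) : G ⧸ N) ∧
            ((g * h₁ * g⁻¹ : G) : G ⧸ N) = (h₂ : G ⧸ N)
          then (1 : ℂ) else 0) := by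
  rw [Fintype.sum_prod_type_right]
  refine Fintype.sum_congr _ _ fun g => ?_
  rw [Fintype.sum_eq_single g₂⁻¹ fun h hne =>
    if_neg fun hc => hne (eq_inv_of_mul_eq_one_right hc.2.2.1)]
  refine if_congr ?_ rfl rfl
  simp only [mul_inv_cancel, true_and, QuotientGroup.mk_mul, QuotientGroup.mk_inv,
    eq_inv_mul_mul_iff_mul_mul_inv_eq, eq_mul_mul_inv_iff_mul_mul_inv_eq]
  refine ⟨fun hc => hc.2, fun hc => ⟨?_, hc⟩⟩
  refine Subgroup.mem_of_mk_eq_mk hNM hg₁ ?_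
  simpa only [QuotientGroup.mk_mul, QuotientGroup.mk_inv, eq_inv_mul_mul_iff_mul_mul_inv_eq]
    using hc.1

/-- Simplification of the tunneling-algebra character formula for `M' = G`, `N' = {e}`:
for `h₁, g₁ ∈ M` and `h₂, g₂ ∈ G`,
`∑_{(h,g) : g⁻¹hg ∈ M} [g₁N = (g⁻¹hg)N]·[g₂h = 1]·[Ng = N h₂ g h₁⁻¹]
  = ∑_{g ∈ G} [N(gg₁g⁻¹) = N g₂⁻¹]·[N(gh₁g⁻¹) = N h₂]`
(where, `N` being normal, coset equality is stated in `G ⧸ N`). -/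
theorem tunneling_character_simplification {G : Type*} [Group G] [Fintype G]
    (N M : Subgroup G) [N.Normal] (hNM : N ≤ M)
    (h₁ g₁ : G) (hh₁ : h₁ ∈ M) (hg₁ : g₁ ∈ M) (h₂ g₂ : G) :
    (∑ p : G × G,
        if p.2⁻¹ * p.1 * p.2 ∈ M ∧
            (g₁ : G ⧸ N) = ((p.2⁻¹ * p.1 * p.2 : G) : G ⧸ N) ∧
            g₂ * p.1 = 1 ∧
            (p.2 : G ⧸ N) = ((h₂ * p.2 * h₁⁻¹ : G) : G ⧸ N)
          then (1 : ℂ) else 0)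
      =
    (∑ g : G,
        if ((g * g₁ * g⁻¹ : G) : G ⧸ N) = ((g₂⁻¹ : G) : G ⧸ N) ∧
            ((g * h₁ * g⁻¹ : G) : G ⧸ N) = (h₂ : G ⧸ N)
          then (1 : ℂ) else 0) :=
  tunneling_character_simplification_general N M hNM h₁ g₁ hg₁ h₂ g₂
end

section
/- Let G be a finite abelian group, N a subgroup of G, and M a subgroup of G with N ≤ M. Then for all h₁, g₁ ∈ M and all h₂, g₂ ∈ G: |N|⁻¹ · ∑ over pairs (h,g) ∈ G × G with g⁻¹hg ∈ M of [g₁N = (g⁻¹hg)N]·[g₂·h = 1]·[Ng = N·h₂·g·h₁⁻¹] equals (|G|/|N|)·[g₁N = g₂⁻¹N]·[h₁N = h₂N], where [P] denotes 1 if the condition P holds and 0 otherwise. (This is the abelian case of the tunneling-algebra character formula with M' = G, N' = {e}.) -/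
open scoped Classical

theorem tunneling_aux_conj {H : Type*} [CommGroup H] (a b c : H) :
    a = b * a * c⁻¹ ↔ c = b := by
  constructor
  · intro h
    have h2 : c * a = b * a := by
      rw [mul_comm c a]
      calc a * c = b * a * c⁻¹ * c := by rw [← h]
        _ = b * a := by rw [mul_assoc, inv_mul_cancel, mul_one]
    exact mul_right_cancel h2
  · intro h
    rw [← h, mul_comm c a, mul_assoc, mul_inv_cancel, mul_one]

/-- The abelian case of the tunneling-algebra character formula with `M' = G`,
`N' = {e}`: for a finite abelian group `G`, subgroups `N ≤ M ≤ G`, `h₁, g₁ ∈ M` and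
`h₂, g₂ ∈ G`,
`|N|⁻¹ ∑_{(h,g) : g⁻¹hg ∈ M} [g₁N = (g⁻¹hg)N]·[g₂h = 1]·[Ng = N h₂ g h₁⁻¹]
  = (|G|/|N|)·[g₁N = g₂⁻¹N]·[h₁N = h₂N]`. -/
theorem tunneling_character_abelian {G : Type*} [CommGroup G] [Fintype G]
    (N M : Subgroup G) (hNM : N ≤ M)
    (h₁ g₁ : G) (hh₁ : h₁ ∈ M) (hg₁ : g₁ ∈ M) (h₂ g₂ : G) :
    (Fintype.card N : ℂ)⁻¹ *
      (∑ p : G × G,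
        if p.2⁻¹ * p.1 * p.2 ∈ M ∧
            (g₁ : G ⧸ N) = ((p.2⁻¹ * p.1 * p.2 : G) : G ⧸ N) ∧
            g₂ * p.1 = 1 ∧
            (p.2 : G ⧸ N) = ((h₂ * p.2 * h₁⁻¹ : G) : G ⧸ N)
          then (1 : ℂ) else 0)
      =
    ((Fintype.card G : ℂ) / (Fintype.card N : ℂ)) *
      (if (g₁ : G ⧸ N) = ((g₂⁻¹ : G) : G ⧸ N) then (1 : ℂ) else 0) *
      (if (h₁ : G ⧸ N) = (h₂ : G ⧸ N) then (1 : ℂ) else 0) := by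
  have key : ∀ x : G, ((x : G ⧸ N) = ((h₂ * x * h₁⁻¹ : G) : G ⧸ N)) ↔
      ((h₁ : G ⧸ N) = (h₂ : G ⧸ N)) := by
    intro x
    simp only [QuotientGroup.mk_mul, QuotientGroup.mk_inv, tunneling_aux_conj]
  have hconj : ∀ a b : G, b⁻¹ * a * b = a := by
    intro a b
    rw [mul_comm b⁻¹ a, mul_assoc, inv_mul_cancel, mul_one]
  have hiff : ∀ p : G × G,
      (p.2⁻¹ * p.1 * p.2 ∈ M ∧
        (g₁ : G ⧸ N) = ((p.2⁻¹ * p.1 * p.2 : G) : G ⧸ N) ∧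
        g₂ * p.1 = 1 ∧
        (p.2 : G ⧸ N) = ((h₂ * p.2 * h₁⁻¹ : G) : G ⧸ N)) ↔
      (p.1 = g₂⁻¹ ∧ ((g₁ : G ⧸ N) = ((g₂⁻¹ : G) : G ⧸ N) ∧
        (h₁ : G ⧸ N) = (h₂ : G ⧸ N))) := by
    intro p
    rw [hconj, key]
    constructor
    · rintro ⟨hm, hq1, hq2, hq3⟩
      have hp1 : p.1 = g₂⁻¹ := eq_inv_of_mul_eq_one_right hq2
      exact ⟨hp1, hp1 ▸ hq1, hq3⟩
    · rintro ⟨hp1, hq1, hq3⟩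
      have hm : p.1 ∈ M := by
        rw [hp1]
        have hn : g₁⁻¹ * g₂⁻¹ ∈ N := QuotientGroup.eq.mp hq1
        have := mul_mem hg₁ (hNM hn)
        simpa [← mul_assoc] using this
      exact ⟨hm, hp1 ▸ hq1, by rw [hp1, mul_inv_cancel], hq3⟩
  have hsum : (∑ p : G × G,
        if p.2⁻¹ * p.1 * p.2 ∈ M ∧
            (g₁ : G ⧸ N) = ((p.2⁻¹ * p.1 * p.2 : G) : G ⧸ N) ∧
            g₂ * p.1 = 1 ∧
            (p.2 : G ⧸ N) = ((h₂ * p.2 * h₁⁻¹ : G) : G ⧸ N)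
          then (1 : ℂ) else 0) =
      ∑ p : G × G, if p.1 = g₂⁻¹ ∧ ((g₁ : G ⧸ N) = ((g₂⁻¹ : G) : G ⧸ N) ∧
        (h₁ : G ⧸ N) = (h₂ : G ⧸ N)) then (1 : ℂ) else 0 := by
    refine Finset.sum_congr rfl fun p _ => ?_
    exact if_congr (hiff p) rfl rfl
  rw [hsum]
  by_cases hc : (g₁ : G ⧸ N) = ((g₂⁻¹ : G) : G ⧸ N) ∧ (h₁ : G ⧸ N) = (h₂ : G ⧸ N)
  · have e1 := hc.1
    have e2 := hc.2
    simp only [e1, e2, and_true, if_true]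
    rw [Fintype.sum_prod_type_right]
    simp only [Finset.sum_ite_eq', Finset.mem_univ, if_true]
    simp [Finset.card_univ, div_eq_inv_mul, mul_comm]
  · rw [not_and_or] at hc
    rcases hc with hc | hc <;>
      [simp only [QuotientGroup.mk_inv] at hc; skip] <;> simp [hc]
end
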